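/- Let q = p^ℓ and let C_q = C^ℓ be the ℓ-fold iterated Cartier operator on rational differentials of a function field F of characteristic p. For any place P and any rational differential ω (with ω ≠ 0), v_P(C_q(ω)) ≥ ⌊v_P(ω)/q⌋, and this holds even when v_P(ω) is negative. -/

import Mathlib

/-!
Write `ω = g • dz` with `g = ∑_{i<p} c_i^p z^i`, so that `C ω = c_{p-1} • dz`. The summands have
valuations `p v(c_i) + i`, pairwise distinct modulo `p`, hence none of them cancels and
`v(g) ≤ p v(c_{p-1}) + (p - 1)`, which says `⌊v(ω)/p⌋ ≤ v(C ω)`. The bound for `C^ℓ` follows by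
induction from `⌊⌊a/p^n⌋/p⌋ = ⌊a/p^(n+1)⌋` and the monotonicity of `⌊·/p⌋`.
-/

theorem Fin.eq_of_mul_add_eq_mul_add {p : ℕ} {a b : ℤ} {i k : Fin p}
    (h : p * a + i = p * b + k) : i = k := by
  have hmod := congrArg (· % (p : ℤ)) h
  simp only [add_comm _ ((_ : ℕ) : ℤ), mul_comm (p : ℤ), Int.add_mul_emod_self_right] at hmod
  rw [Int.emod_eq_of_lt (by positivity) (by exact_mod_cast i.isLt),
    Int.emod_eq_of_lt (by positivity) (by exact_mod_cast k.isLt)] at hmod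
  exact Fin.ext (by exact_mod_cast hmod)

namespace AddValuation

variable {F : Type*} [Field F]

-- `v` is only constrained on nonzero elements; its value at `0` is replaced by `⊤`.
open Classical in
noncomputable def ofInt (v : F → ℤ)
    (hv_mul : ∀ a b : F, a ≠ 0 → b ≠ 0 → v (a * b) = v a + v b)
    (hv_add : ∀ a b : F, a ≠ 0 → b ≠ 0 → a + b ≠ 0 → min (v a) (v b) ≤ v (a + b)) :
    AddValuation F (WithTop ℤ) :=
  AddValuation.of (fun a => if a = 0 then ⊤ else (v a : WithTop ℤ)) (if_pos rfl)
    (by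
      have h := hv_mul 1 1 one_ne_zero one_ne_zero
      rw [mul_one, left_eq_add] at h
      simp [h])
    (by
      intro a b
      by_cases ha : a = 0
      · simp [ha]
      by_cases hb : b = 0
      · simp [hb]
      by_cases hab : a + b = 0
      · simp [hab]
      simp only [ha, hb, hab, if_false]
      exact_mod_cast hv_add a b ha hb hab)
    (by
      intro a b
      by_cases ha : a = 0
      · simp [ha]
      by_cases hb : b = 0
      · simp [hb]
      simp only [ha, hb, mul_ne_zero ha hb, if_false]
      exact_mod_cast hv_mul a b ha hb)

theorem ofInt_apply_of_ne_zero {v : F → ℤ} {hv_mul} {hv_add} {a : F} (ha : a ≠ 0) :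
    ofInt v hv_mul hv_add a = v a :=
  if_neg ha

theorem map_sum_le_of_distinct_val {R Γ : Type*} [Ring R] [LinearOrderedAddCommMonoidWithTop Γ]
    (w : AddValuation R Γ) {ι : Type*} {s : Finset ι} {f : ι → R}
    (hf : ∀ i ∈ s, ∀ k ∈ s, i ≠ k → w (f i) ≠ ⊤ → w (f i) ≠ w (f k)) {j : ι}
    (hj : j ∈ s) : w (∑ i ∈ s, f i) ≤ w (f j) := by
  classical
  obtain ⟨i₀, hi₀, hmin⟩ := s.exists_min_image (fun i => w (f i)) ⟨j, hj⟩
  refine le_trans ?_ (hmin j hj)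
  rcases eq_or_ne (w (f i₀)) ⊤ with htop | htop
  · exact htop ▸ le_top
  rw [← Finset.add_sum_erase s f hi₀, map_add_eq_of_lt_left]
  refine w.map_lt_sum htop fun i hi => (hmin i (Finset.mem_of_mem_erase hi)).lt_of_ne ?_
  exact hf i₀ hi₀ i (Finset.mem_of_mem_erase hi) (Finset.ne_of_mem_erase hi).symm htop

theorem map_sum_pow_mul_pow_le (w : AddValuation F (WithTop ℤ)) {p : ℕ} {z : F} (hz : w z = 1)
    (c : Fin p → F) (j : Fin p) :
    w (∑ i, c i ^ p * z ^ (i : ℕ)) ≤ p • w (c j) + (j : ℕ) := by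
  have hterm : ∀ i : Fin p, w (c i ^ p * z ^ (i : ℕ)) = p • w (c i) + (i : ℕ) := by
    intro i
    rw [map_mul, map_pow, map_pow, hz, nsmul_one]
  have hp_top : p • (⊤ : WithTop ℤ) = ⊤ := by
    obtain ⟨m, hm⟩ := Nat.exists_eq_add_one_of_ne_zero j.pos.ne'
    rw [hm, succ_nsmul, WithTop.add_top]
  refine (w.map_sum_le_of_distinct_val (fun i _ k _ hik hfin heq => hik ?_)
    (Finset.mem_univ j)).trans_eq (hterm j)
  rw [hterm, hterm] at heq
  rw [hterm] at hfin
  generalize w (c i) = x, w (c k) = y at hfin heq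
  induction x using WithTop.recTopCoe with
  | top => simp [hp_top] at hfin
  | coe a =>
    induction y using WithTop.recTopCoe with
    | top => rw [hp_top, WithTop.top_add] at heq; exact absurd heq hfin
    | coe b =>
      norm_cast at heq
      exact Fin.eq_of_mul_add_eq_mul_add (by simpa using heq)

end AddValuation

theorem Int.fdiv_le_of_le_mul_add_pred {a b : ℤ} {p : ℕ} (hp : 0 < p)
    (h : a ≤ p * b + (p - 1 : ℕ)) : a.fdiv p ≤ b := by
  rw [Int.fdiv_eq_ediv_of_nonneg _ (by positivity), ← Int.lt_add_one_iff,
    Int.ediv_lt_iff_lt_mul (by positivity)]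
  push_cast [Nat.cast_sub hp] at h
  linarith

theorem Function.iterate_eq_zero_or_fdiv_pow_le {Ω : Type*} [Zero Ω] (C : Ω → Ω) (v : Ω → ℤ)
    {q : ℤ} (hq : 0 < q) (hC₀ : C 0 = 0) (hC : ∀ ω, C ω = 0 ∨ (v ω).fdiv q ≤ v (C ω))
    (ω : Ω) (n : ℕ) :
    C^[n] ω = 0 ∨ (v ω).fdiv (q ^ n) ≤ v (C^[n] ω) := by
  induction n with
  | zero => exact .inr (by simp [Int.fdiv_one])
  | succ n ih =>
    rw [Function.iterate_succ_apply']
    rcases ih with h | h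
    · exact .inl (by rw [h, hC₀])
    refine (hC (C^[n] ω)).imp_right fun hstep => ?_
    calc (v ω).fdiv (q ^ (n + 1)) = ((v ω).fdiv (q ^ n)).fdiv q := by
          rw [pow_succ, Int.fdiv_fdiv_eq_fdiv_mul _ (pow_nonneg hq.le n) hq.le]
      _ ≤ (v (C^[n] ω)).fdiv q := by
          rw [Int.fdiv_eq_ediv_of_nonneg _ hq.le, Int.fdiv_eq_ediv_of_nonneg _ hq.le]
          exact Int.ediv_le_ediv hq h
      _ ≤ v (C (C^[n] ω)) := hstep

theorem cartier_eq_zero_or_fdiv_valuation_le {p : ℕ} (hp : 0 < p) {F Ω : Type*} [Field F]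
    [AddCommGroup Ω] [Module F Ω] (w : AddValuation F (WithTop ℤ)) {z : F} (hz : w z = 1)
    (dz : Ω) (hbasis : ∀ ω : Ω, ∃ g : F, ω = g • dz)
    (hdec : ∀ g : F, ∃ c : Fin p → F, g = ∑ i : Fin p, c i ^ p * z ^ (i : ℕ))
    (vΩ : Ω → ℤ) (hvΩ : ∀ g : F, g ≠ 0 → (vΩ (g • dz) : WithTop ℤ) = w g) (C : Ω → Ω)
    (hC : ∀ c : Fin p → F, C ((∑ i : Fin p, c i ^ p * z ^ (i : ℕ)) • dz) =
      c ⟨p - 1, Nat.sub_lt hp Nat.one_pos⟩ • dz)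
    (ω : Ω) : C ω = 0 ∨ (vΩ ω).fdiv p ≤ vΩ (C ω) := by
  obtain ⟨g, rfl⟩ := hbasis ω
  obtain ⟨c, rfl⟩ := hdec g
  rw [hC]
  set j : Fin p := ⟨p - 1, Nat.sub_lt hp Nat.one_pos⟩
  by_cases hc : c j = 0
  · exact .inl (by rw [hc, zero_smul])
  have hle := w.map_sum_pow_mul_pow_le hz c j
  rw [← hvΩ _ hc] at hle
  have hg : ∑ i : Fin p, c i ^ p * z ^ (i : ℕ) ≠ 0 := by
    rintro hg
    rw [hg, AddValuation.map_zero, top_le_iff, ← WithTop.coe_nsmul] at hle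
    exact WithTop.add_ne_top.mpr ⟨WithTop.coe_ne_top, WithTop.coe_ne_top⟩ hle
  rw [← hvΩ _ hg] at hle
  exact .inr (Int.fdiv_le_of_le_mul_add_pred hp (by exact_mod_cast hle))

theorem iterated_cartier_valuation_floor_bound_general
    {p : ℕ} (hp : p.Prime)
    {F : Type*} [Field F]
    {Ω : Type*} [AddCommGroup Ω] [Module F Ω]
    -- the universal derivation on rational differential forms
    (d : F → Ω)
    (hd_add : ∀ a b : F, d (a + b) = d a + d b)
    -- `z` is a uniformizing parameter at the place `P` (hence a separating element)
    (z : F)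
    -- `vF` is the discrete valuation of `F` at the place `P`
    (vF : F → ℤ)
    (hv_mul : ∀ a b : F, a ≠ 0 → b ≠ 0 → vF (a * b) = vF a + vF b)
    (hv_add : ∀ a b : F, a ≠ 0 → b ≠ 0 → a + b ≠ 0 → min (vF a) (vF b) ≤ vF (a + b))
    (hz : vF z = 1)
    (hbasis : ∀ ω : Ω, ∃! g : F, ω = g • d z)
    (hdec : ∀ g : F, ∃ c : Fin p → F, g = ∑ i : Fin p, (c i) ^ p * z ^ (i : ℕ))
    -- `vΩ` is the valuation of differentials at `P`
    (vΩ : Ω → ℤ)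
    (hvΩ : ∀ g : F, g ≠ 0 → vΩ (g • d z) = vF g)
    -- the Cartier operator
    (C : Ω → Ω)
    (hC : ∀ c : Fin p → F,
      C ((∑ i : Fin p, (c i) ^ p * z ^ (i : ℕ)) • d z)
        = c ⟨p - 1, Nat.sub_lt hp.pos Nat.one_pos⟩ • d z)
    (ℓ : ℕ) :
    ∀ ω : Ω, ω ≠ 0 →
      (C^[ℓ] ω = 0 ∨ Int.fdiv (vΩ ω) ((p : ℤ) ^ ℓ) ≤ vΩ (C^[ℓ] ω)) := by
  have hdz : d z ≠ 0 := by
    intro h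
    obtain ⟨_, -, huniq⟩ := hbasis 0
    exact one_ne_zero ((huniq 1 (by simp [h])).trans (huniq 0 (by simp [h])).symm)
  have hz₀ : z ≠ 0 := by
    rintro rfl
    exact hdz (AddMonoidHom.mk' d hd_add).map_zero
  set w := AddValuation.ofInt vF hv_mul hv_add
  have hwz : w z = 1 := by rw [AddValuation.ofInt_apply_of_ne_zero hz₀, hz]; rfl
  have hC₀ : C 0 = 0 := by simpa [zero_pow hp.ne_zero] using hC 0
  have hstep := cartier_eq_zero_or_fdiv_valuation_le hp.pos w hwz (d z)
    (fun ω => (hbasis ω).exists) hdec vΩ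
    (fun g hg => by rw [hvΩ g hg, AddValuation.ofInt_apply_of_ne_zero hg]) C hC
  exact fun ω _ =>
    Function.iterate_eq_zero_or_fdiv_pow_le C vΩ (by exact_mod_cast hp.pos) hC₀ hstep ω ℓ

/-- For `q = p^ℓ` and the `ℓ`-fold iterated Cartier operator
`C_q = C^ℓ`, the valuation at any place `P` satisfies
`v_P(C_q(ω)) ≥ ⌊v_P(ω)/q⌋`, even when `v_P(ω)` is negative (the conclusion holds
trivially when `C_q(ω) = 0`, which has valuation `∞`). -/
theorem iterated_cartier_valuation_floor_bound
    {p : ℕ} (hp : p.Prime)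
    {F : Type*} [Field F] [CharP F p]
    {Ω : Type*} [AddCommGroup Ω] [Module F Ω]
    -- the universal derivation on rational differential forms
    (d : F → Ω)
    (hd_add : ∀ a b : F, d (a + b) = d a + d b)
    (hd_mul : ∀ a b : F, d (a * b) = a • d b + b • d a)
    -- `z` is a uniformizing parameter at the place `P` (hence a separating element)
    (z : F)
    -- `vF` is the discrete valuation of `F` at the place `P`
    (vF : F → ℤ)
    (hv_mul : ∀ a b : F, a ≠ 0 → b ≠ 0 → vF (a * b) = vF a + vF b)
    (hv_add : ∀ a b : F, a ≠ 0 → b ≠ 0 → a + b ≠ 0 → min (vF a) (vF b) ≤ vF (a + b))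
    (hz : vF z = 1)
    (hbasis : ∀ ω : Ω, ∃! g : F, ω = g • d z)
    (hdec : ∀ g : F, ∃ c : Fin p → F, g = ∑ i : Fin p, (c i) ^ p * z ^ (i : ℕ))
    -- `vΩ` is the valuation of differentials at `P`
    (vΩ : Ω → ℤ)
    (hvΩ : ∀ g : F, g ≠ 0 → vΩ (g • d z) = vF g)
    -- the Cartier operator
    (C : Ω → Ω)
    (hC : ∀ c : Fin p → F,
      C ((∑ i : Fin p, (c i) ^ p * z ^ (i : ℕ)) • d z)
        = c ⟨p - 1, Nat.sub_lt hp.pos Nat.one_pos⟩ • d z)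
    (ℓ : ℕ) (hℓ : 1 ≤ ℓ) :
    ∀ ω : Ω, ω ≠ 0 →
      (C^[ℓ] ω = 0 ∨ Int.fdiv (vΩ ω) ((p : ℤ) ^ ℓ) ≤ vΩ (C^[ℓ] ω)) :=
  iterated_cartier_valuation_floor_bound_general hp d hd_add z vF hv_mul hv_add hz hbasis hdec vΩ
    hvΩ C hC ℓ
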